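/- arXiv:1610.08359 — 4 statements merged into one kernel-verified Lean document; each statement's English description precedes it below -/
import Mathlib

section
/- In a not-necessarily-associative ring in which multiplication by 2 is injective, if the commutator is a derivation of the Jordan product, then the ring is flexible, i.e. A(f,g,f) = 0 for all f,g. -/
/-- In a not-necessarily-associative ring in which multiplication by 2 is
injective, if the commutator `[f,g] = f*g - g*f` is a derivation of the Jordan
product `f∘g = f*g + g*f`, then the ring is flexible: `A(f,g,f) = 0`. -/
theorem flexible_of_commutator_derivation_of_jordan
    {R : Type*} [NonUnitalNonAssocRing R]
    (h2 : ∀ x y : R, x + x = y + y → x = y)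
    (A : R → R → R → R)
    (hA : ∀ a b c, A a b c = a * (b * c) - (a * b) * c)
    (comm : R → R → R) (hcomm : ∀ a b, comm a b = a * b - b * a)
    (jordan : R → R → R) (hjordan : ∀ a b, jordan a b = a * b + b * a)
    (hder : ∀ f g h : R,
      comm (jordan f g) h = jordan (comm f h) g + jordan f (comm g h)) :
    ∀ f g : R, A f g f = 0 := by
  intro f g
  have H := hder f g f
  simp only [hcomm, hjordan, mul_add, add_mul, mul_sub, sub_mul] at H
  apply h2 _ 0
  rw [hA]
  rw [add_zero]
  linear_combination (norm := abel) -H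
end

section
/- Let B1 be an antisymmetric bi-derivation and B2 a symmetric bilinear map on a commutative algebra A over a field of characteristic zero, and let B3 be any bilinear map. Define A_3(f,g,h) := dB3(f,g,h) + B2(f,B1(g,h)) - B2(B1(f,g),h) + B1(f,B2(g,h)) - B1(B2(f,g),h). Then the totally antisymmetric part of A_3 vanishes: Σ_{σ∈S_3} sgn(σ) A_3(σ(f),σ(g),σ(h)) = 0. -/
/-- Let `B1` be an antisymmetric bi-derivation and `B2` a symmetric bilinear
map on a commutative algebra over a field of characteristic zero, `B3` any
bilinear map, and
`A_3(f,g,h) = dB3(f,g,h) + B2(f,B1(g,h)) - B2(B1(f,g),h)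
  + B1(f,B2(g,h)) - B1(B2(f,g),h)`.
Then the totally antisymmetric part of `A_3` vanishes:
`Σ_{σ∈S_3} sgn(σ) A_3(σf,σg,σh) = 0`. -/
theorem A3_totally_antisymmetric_part_vanishes
    {k A : Type*} [Field k] [CharZero k] [CommRing A] [Algebra k A]
    (B1 B2 B3 : A →ₗ[k] A →ₗ[k] A)
    (hanti : ∀ f g : A, B1 f g = - B1 g f)
    (hder₁ : ∀ f g h : A, B1 (f * g) h = f * B1 g h + B1 f h * g)
    (hder₂ : ∀ f g h : A, B1 f (g * h) = B1 f g * h + g * B1 f h)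
    (hsym : ∀ f g : A, B2 f g = B2 g f)
    (A3 : A → A → A → A)
    (hA3 : ∀ f g h, A3 f g h =
      (f * B3 g h - B3 (f * g) h + B3 f (g * h) - B3 f g * h)
        + B2 f (B1 g h) - B2 (B1 f g) h
        + B1 f (B2 g h) - B1 (B2 f g) h) :
    ∀ f g h : A,
      A3 f g h + A3 g h f + A3 h f g
        - A3 f h g - A3 g f h - A3 h g f = 0 := by
  intro f g h
  simp only [hA3]
  rw [hanti h g, hanti f h, hanti g f]
  simp only [map_neg, LinearMap.neg_apply]
  rw [hsym (B1 g h) f, hsym (B1 h f) g, hsym (B1 f g) h,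
      hsym g f, hsym h g, hsym f h,
      mul_comm g f, mul_comm h g, mul_comm f h]
  ring
end

section
/- For a formal deformation f ⋆ g = Σ λ^j B_j(f,g) of a commutative algebra with B_0(f,g) = f·g and A_1 = 0, the Hochschild coboundary of the third associator coefficient A_3 satisfies dA_3(f,g,h,k) = A_2(f,g,B1(h,k)) - A_2(f,B1(g,h),k) + A_2(B1(f,g),h,k) + B1(A_2(g,h,k),f) - B1(A_2(f,g,h),k), where B1 is assumed antisymmetric and a bi-derivation. -/
/-- For a formal deformation of a commutative algebra with `B1` antisymmetric
and a bi-derivation, the Hochschild coboundary of the third associator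
coefficient `A_3` satisfies
`dA_3(f,g,h,k) = A_2(f,g,B1(h,k)) - A_2(f,B1(g,h),k) + A_2(B1(f,g),h,k)
  + B1(A_2(g,h,k),f) - B1(A_2(f,g,h),k)`,
where `dφ(f,g,h,k) = f·φ(g,h,k) - φ(f·g,h,k) + φ(f,g·h,k) - φ(f,g,h·k)
  + φ(f,g,h)·k`. -/
theorem coboundary_A3_eq_obstruction
    {k A : Type*} [Field k] [CharZero k] [CommRing A] [Algebra k A]
    (B1 B2 B3 : A →ₗ[k] A →ₗ[k] A)
    (hanti : ∀ f g : A, B1 f g = - B1 g f)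
    (hder₁ : ∀ f g h : A, B1 (f * g) h = f * B1 g h + B1 f h * g)
    (hder₂ : ∀ f g h : A, B1 f (g * h) = B1 f g * h + g * B1 f h)
    (A2 : A → A → A → A)
    (hA2 : ∀ f g h, A2 f g h =
      (f * B2 g h - B2 (f * g) h + B2 f (g * h) - B2 f g * h)
        + B1 f (B1 g h) - B1 (B1 f g) h)
    (A3 : A → A → A → A)
    (hA3 : ∀ f g h, A3 f g h =
      (f * B3 g h - B3 (f * g) h + B3 f (g * h) - B3 f g * h)
        + B2 f (B1 g h) - B2 (B1 f g) h
        + B1 f (B2 g h) - B1 (B2 f g) h) :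
    ∀ f g h j : A,
      f * A3 g h j - A3 (f * g) h j + A3 f (g * h) j - A3 f g (h * j)
          + A3 f g h * j
        = A2 f g (B1 h j) - A2 f (B1 g h) j + A2 (B1 f g) h j
          + B1 (A2 g h j) f - B1 (A2 f g h) j := by
  intro f g h j
  simp only [hA3, hA2, map_sub, map_add, LinearMap.sub_apply, LinearMap.add_apply, hder₁, hder₂]
  rw [mul_comm (B1 f h) g, mul_comm (B1 g j) h]
  linear_combination (norm := ring_nf) (-g) * hanti f (B2 h j) + j * hanti f (B2 g h) + hanti f (B2 (g*h) j) - hanti f (B2 g (h*j)) - hanti f (B1 g (B1 h j)) + hanti f (B1 (B1 g h) j) + (B2 g h) * hanti j f - (B2 h j) * hanti g f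
end

section
/- Let ⋆ be a formal star product f⋆g = Σ λ^j B_j(f,g) on a commutative algebra with B_0(f,g)=f·g, B1 antisymmetric and a bi-derivation, and suppose there exist elements f,g,h,k such that O(f,g,h,k) := A_2(f,g,B1(h,k)) - A_2(f,B1(g,h),k) + A_2(B1(f,g),h,k) + B1(A_2(g,h,k),f) - B1(A_2(f,g,h),k) ≠ 0, where A_2(f,g,h) = dB2(f,g,h) + B1(f,B1(g,h)) - B1(B1(f,g),h). Then the third-order associator coefficient A_3 is not identically zero, regardless of the choice of B3. -/
/-- Let `⋆` be a formal star product on a commutative algebra over a field of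
characteristic zero, with `B_0` the commutative product, `B1` antisymmetric
and a bi-derivation, and suppose there exist `f,g,h,k` with
`O(f,g,h,k) := A_2(f,g,B1(h,k)) - A_2(f,B1(g,h),k) + A_2(B1(f,g),h,k)
  + B1(A_2(g,h,k),f) - B1(A_2(f,g,h),k) ≠ 0`,
where `A_2(f,g,h) = dB2(f,g,h) + B1(f,B1(g,h)) - B1(B1(f,g),h)`. Then the
third-order associator coefficient
`A_3(f,g,h) = dB3(f,g,h) + B2(f,B1(g,h)) - B2(B1(f,g),h)
  + B1(f,B2(g,h)) - B1(B2(f,g),h)`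
is not identically zero, regardless of the choice of the bilinear map `B3`. -/
theorem A3_ne_zero_of_obstruction_ne_zero
    {k A : Type*} [Field k] [CharZero k] [CommRing A] [Algebra k A]
    (B1 B2 : A →ₗ[k] A →ₗ[k] A)
    (hanti : ∀ f g : A, B1 f g = - B1 g f)
    (hder₁ : ∀ f g h : A, B1 (f * g) h = f * B1 g h + B1 f h * g)
    (hder₂ : ∀ f g h : A, B1 f (g * h) = B1 f g * h + g * B1 f h)
    (A2 : A → A → A → A)
    (hA2 : ∀ f g h, A2 f g h =
      (f * B2 g h - B2 (f * g) h + B2 f (g * h) - B2 f g * h)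
        + B1 f (B1 g h) - B1 (B1 f g) h)
    (hO : ∃ f g h j : A,
      A2 f g (B1 h j) - A2 f (B1 g h) j + A2 (B1 f g) h j
        + B1 (A2 g h j) f - B1 (A2 f g h) j ≠ 0) :
    ∀ B3 : A →ₗ[k] A →ₗ[k] A,
      ∃ f g h : A,
        (f * B3 g h - B3 (f * g) h + B3 f (g * h) - B3 f g * h)
          + B2 f (B1 g h) - B2 (B1 f g) h
          + B1 f (B2 g h) - B1 (B2 f g) h ≠ 0 := by
  intro B3
  by_contra hcon
  push_neg at hcon
  obtain ⟨f, g, h, j, hne⟩ := hO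
  apply hne
  have e1 := hcon g h j
  have e2 := hcon (f * g) h j
  have e3 := hcon f (g * h) j
  have e4 := hcon f g (h * j)
  have e5 := hcon f g h
  simp only [hA2, hder₁, hder₂, map_add, map_sub, map_neg, map_mul, mul_assoc,
    LinearMap.add_apply, LinearMap.sub_apply, LinearMap.neg_apply] at e1 e2 e3 e4 e5 ⊢
  ring_nf at e1 e2 e3 e4 e5 ⊢
  linear_combination f * e1 - e2 + e3 - e4 + e5 * j
    - hanti f (B1 (B1 g h) j) + hanti f (B1 g (B1 h j))
    - hanti f (B2 (g * h) j) + hanti f (B2 g (h * j))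
    - j * hanti f (B2 g h) + g * hanti f (B2 h j)
    + B2 h j * hanti f g - B2 g h * hanti f j
end
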